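/- Let f(x) = ax + b and g(x) = cx + d be affine maps of ℝ with a > 1 and c > 1 and suppose 1/a + 1/c ≤ 1. Then either f and g commute (f ∘ g = g ∘ f), or the semigroup generated by f and g is free of rank 2 with free basis f, g. -/

import Mathlib

/-!
Both maps expand about their fixed points `p` and `q`; if `p = q` they commute. Otherwise, in the
affine coordinate sending `p, q` to `0, 1`, the inverses of `f` and `g` map `(0, 1)` onto
`(0, 1/a)` and `(1 - 1/c, 1)`, which are disjoint because `1/a + 1/c ≤ 1`. So a word ending in `f`
pulls points of `(0, 1)` back into the first piece and a word ending in `g` into the second: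
words with different last letters differ, and equal last letters cancel (ping-pong).
-/

open Function Set

section PingPong

variable {X ι : Type*}

def wordMap (φ : ι → X → X) (w : List ι) : X → X :=
  (w.map φ).foldr (· ∘ ·) id

lemma wordMap_cons (φ : ι → X → X) (i : ι) (w : List ι) :
    wordMap φ (i :: w) = φ i ∘ wordMap φ w := rfl

lemma wordMap_append_singleton (φ : ι → X → X) (w : List ι) (i : ι) :
    wordMap φ (w ++ [i]) = wordMap φ w ∘ φ i := by
  induction w with
  | nil => rfl
  | cons j w ih => rw [List.cons_append, wordMap_cons, ih, wordMap_cons, comp_assoc]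

lemma wordMap_injective_of_injective {φ : ι → X → X} (hφ : ∀ i, Injective (φ i)) (w : List ι) :
    Injective (wordMap φ w) := by
  induction w with
  | nil => exact injective_id
  | cons i w ih => exact (hφ i).comp ih

structure IsPingPong (φ : ι → X → X) (J : Set X) (S : ι → Set X) : Prop where
  nonempty : J.Nonempty
  pairwise_disjoint : Pairwise (Disjoint on S)
  subset : ∀ i, S i ⊆ J
  surjOn : ∀ i, SurjOn (φ i) (S i) J

namespace IsPingPong

variable {φ : ι → X → X} {J : Set X} {S : ι → Set X}

lemma image {Y : Type*} {ψ : ι → Y → Y} {ℓ : X → Y} (h : IsPingPong φ J S) (hℓ : Injective ℓ)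
    (hconj : ∀ i, Semiconj ℓ (φ i) (ψ i)) : IsPingPong ψ (ℓ '' J) (fun i => ℓ '' S i) where
  nonempty := h.nonempty.image ℓ
  pairwise_disjoint _ _ hij := (disjoint_image_iff hℓ).2 (h.pairwise_disjoint hij)
  subset i := image_mono (h.subset i)
  surjOn i := (hconj i).surjOn_image (h.surjOn i)

lemma surjOn_wordMap (h : IsPingPong φ J S) (w : List ι) : SurjOn (wordMap φ w) J J := by
  induction w with
  | nil => exact surjOn_id J
  | cons i w ih => exact ((h.surjOn i).mono (h.subset i) subset_rfl).comp ih

lemma surjOn_wordMap_append_singleton (h : IsPingPong φ J S) (w : List ι) (i : ι) :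
    SurjOn (wordMap φ (w ++ [i])) (S i) J := by
  rw [wordMap_append_singleton]
  exact (h.surjOn_wordMap w).comp (h.surjOn i)

lemma mem_of_eqOn_wordMap_append_singleton (h : IsPingPong φ J S) (hφ : ∀ i, Injective (φ i))
    {k : X → X} {w : List ι} {j : ι} (hk : EqOn k (wordMap φ (w ++ [j])) J) {x : X}
    (hx : x ∈ J) (hkx : k x ∈ J) : x ∈ S j := by
  rw [hk hx] at hkx
  exact (wordMap_injective_of_injective hφ _).mem_set_image.1
    (h.surjOn_wordMap_append_singleton w j hkx)

lemma not_eqOn_id_wordMap_append_singleton [Nontrivial ι] (h : IsPingPong φ J S)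
    (hφ : ∀ i, Injective (φ i)) (w : List ι) (j : ι) : ¬ EqOn id (wordMap φ (w ++ [j])) J := by
  intro heq
  obtain ⟨i, hij⟩ := exists_ne j
  obtain ⟨z, hz⟩ := h.nonempty
  obtain ⟨x, hxi, -⟩ := h.surjOn i hz
  have hxJ := h.subset i hxi
  exact (h.pairwise_disjoint hij).ne_of_mem hxi
    (h.mem_of_eqOn_wordMap_append_singleton hφ heq hxJ hxJ) rfl

lemma eq_of_eqOn_wordMap [Nontrivial ι] (h : IsPingPong φ J S) (hφ : ∀ i, Injective (φ i))
    {w₁ w₂ : List ι} (heq : EqOn (wordMap φ w₁) (wordMap φ w₂) J) : w₁ = w₂ := by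
  induction w₁ using List.reverseRecOn generalizing w₂ with
  | nil =>
    rcases w₂.eq_nil_or_concat' with rfl | ⟨v, j, rfl⟩
    · rfl
    · exact (h.not_eqOn_id_wordMap_append_singleton hφ v j heq).elim
  | append_singleton u i ih =>
    rcases w₂.eq_nil_or_concat' with rfl | ⟨v, j, rfl⟩
    · exact (h.not_eqOn_id_wordMap_append_singleton hφ u i heq.symm).elim
    obtain rfl | hij := eq_or_ne i j
    · suffices EqOn (wordMap φ u) (wordMap φ v) J by rw [ih this]
      intro z hz
      obtain ⟨x, hx, rfl⟩ := h.surjOn i hz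
      simpa only [wordMap_append_singleton, comp_apply] using heq (h.subset i hx)
    · obtain ⟨z, hz⟩ := h.nonempty
      obtain ⟨x, hxi, rfl⟩ := h.surjOn_wordMap_append_singleton u i hz
      exact ((h.pairwise_disjoint hij).ne_of_mem hxi
        (h.mem_of_eqOn_wordMap_append_singleton hφ heq (h.subset i hxi) hz) rfl).elim

theorem injective_wordMap [Nontrivial ι] (h : IsPingPong φ J S) (hφ : ∀ i, Injective (φ i)) :
    Injective (wordMap φ) := fun _ _ heq => h.eq_of_eqOn_wordMap hφ (heq ▸ eqOn_refl _ _)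

end IsPingPong

end PingPong

section Affine

variable {a b c d p q : ℝ}

lemma exists_mul_add_eq_self (ha : a ≠ 1) (b : ℝ) : ∃ p, a * p + b = p :=
  ⟨b / (1 - a), by field_simp [sub_ne_zero.2 ha.symm]; ring⟩

lemma injective_mul_add (ha : a ≠ 0) (b : ℝ) : Injective (a * · + b) :=
  fun _ _ h => mul_left_cancel₀ ha (add_right_cancel h)

lemma comp_comm_of_mul_add_eq_self (hp : a * p + b = p) (hq : c * p + d = p) :
    (a * · + b) ∘ (c * · + d) = (c * · + d) ∘ (a * · + b) := by
  funext x
  simp only [comp_apply]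
  linear_combination (1 - c) * hp - (1 - a) * hq

lemma semiconj_lineMap_of_mul_add_eq_self_left (hp : a * p + b = p) (q : ℝ) :
    Semiconj (AffineMap.lineMap p q) (a * ·) (a * · + b) := fun t => by
  simp only [AffineMap.lineMap_apply_ring']
  linear_combination -hp

lemma semiconj_lineMap_of_mul_add_eq_self_right (hq : c * q + d = q) (p : ℝ) :
    Semiconj (AffineMap.lineMap p q) (c * · + (1 - c)) (c * · + d) := fun t => by
  simp only [AffineMap.lineMap_apply_ring']
  linear_combination -hq

lemma isPingPong_unitInterval (ha : 1 < a) (hc : 1 < c) (hsum : a⁻¹ + c⁻¹ ≤ 1) :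
    IsPingPong ![(a * ·), (c * · + (1 - c))] (Ioo 0 1) ![Ioo 0 a⁻¹, Ioo (1 - c⁻¹) 1] where
  nonempty := nonempty_Ioo.2 zero_lt_one
  pairwise_disjoint := by
    have hle : a⁻¹ ≤ 1 - c⁻¹ := by linarith
    have : Disjoint (Ioo 0 a⁻¹) (Ioo (1 - c⁻¹) 1) :=
      Ioo_disjoint_Ioo.2 ((min_le_left _ _).trans (hle.trans (le_max_right _ _)))
    intro i j hij
    fin_cases i <;> fin_cases j
    all_goals first | exact absurd rfl hij | exact this | exact this.symm
  subset := Fin.forall_fin_two.2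
    ⟨Ioo_subset_Ioo_right (inv_le_one_of_one_le₀ ha.le),
      Ioo_subset_Ioo_left (sub_nonneg.2 (inv_le_one_of_one_le₀ hc.le))⟩
  surjOn := Fin.forall_fin_two.2 ⟨by
    simp [SurjOn, image_mul_left_Ioo (zero_lt_one.trans ha), (zero_lt_one.trans ha).ne'], by
    simp [SurjOn, image_affine_Ioo (zero_lt_one.trans hc), (zero_lt_one.trans hc).ne', mul_sub]⟩

end Affine

/-- **Theorem 2.** Let `f x = a * x + b` and `g x = c * x + d` with `a > 1`, `c > 1`
and `1/a + 1/c ≤ 1`. Then either `f` and `g` commute, or they generate a free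
semigroup of rank 2 with free basis `f, g`. -/
theorem affine_pair_commute_or_free
    (a b c d : ℝ) (f g : ℝ → ℝ)
    (ha : 1 < a) (hc : 1 < c)
    (hf : f = fun x => a * x + b) (hg : g = fun x => c * x + d)
    (hsum : 1 / a + 1 / c ≤ 1) :
    f ∘ g = g ∘ f ∨
      ∀ w₁ w₂ : List (Fin 2),
        (w₁.map ![f, g]).foldr (· ∘ ·) id = (w₂.map ![f, g]).foldr (· ∘ ·) id →
          w₁ = w₂ := by
  subst hf hg
  obtain ⟨p, hp⟩ := exists_mul_add_eq_self ha.ne' b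
  obtain ⟨q, hq⟩ := exists_mul_add_eq_self hc.ne' d
  rcases eq_or_ne p q with rfl | hpq
  · exact Or.inl (comp_comm_of_mul_add_eq_self hp hq)
  right
  have hpingpong := (isPingPong_unitInterval ha hc (by simpa only [one_div] using hsum)).image
    (ψ := ![(a * · + b), (c * · + d)]) (AffineMap.lineMap_injective ℝ hpq)
    (Fin.forall_fin_two.2 ⟨semiconj_lineMap_of_mul_add_eq_self_left hp q,
      semiconj_lineMap_of_mul_add_eq_self_right hq p⟩)
  exact hpingpong.injective_wordMap <| Fin.forall_fin_two.2
    ⟨injective_mul_add (zero_lt_one.trans ha).ne' b, injective_mul_add (zero_lt_one.trans hc).ne' d⟩
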